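/- Let L > n ≥ 1 be integers and let p, q be real parameters, and fix a position k with 1 ≤ k ≤ L−1. Then the weighted sum over configurations having an ordinary particle at distance L−k behind the tracer (equivalently at word position k) satisfies: ∑_{a : a_k = 1} w_{p,q}(a) = ∑_{j=0}^{L−n−1} ∑_{r=0}^{j} C(k−1, r) · C(L−1−k, j−r) · q^r · p^{j−r} · R(L−j−1, n−1; p, q), where the left-hand sum runs over all words a of length L−1 with entries in {0,1} having exactly n ones and a_k = 1, and C(·,·) denotes the binomial coefficient. -/

import Mathlib

/-!
Fix the particle at word position `k`. Every hole `i` has one more particle after it (if `i < k`)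
or before it (if `k < i`) than in the word with position `k` deleted, so its factor
`1 + p·m_i + q·n_i` is `q` (resp. `p`) plus the factor it has there. Expanding the product over
the holes writes the weight as a sum over sets `S` of holes of `q^#(S before k) · p^#(S after k)`
times the weight of the word with `k` and `S` deleted. Weights only see the relative order of
positions, so summing over the other `n - 1` particles gives `R (L - 1 - #S) (n - 1)`, and
counting the sets `S` by their parts before and after `k` yields the binomial coefficients.
-/

open Finset

/-- The stationary weight of a word `a` with entries in `{0,1}` (encoded as `Fin 2`):
the product over positions `i` with `a i = 0` of `1 + p·m_i(a) + q·n_i(a)`,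
where `m_i(a)` (resp. `n_i(a)`) is the number of `1`'s strictly before (resp. after) `i`. -/
noncomputable def wt (p q : ℝ) {m : ℕ} (a : Fin m → Fin 2) : ℝ :=
  ∏ i ∈ univ.filter (fun i => a i = 0),
    (1 + p * ((univ.filter (fun j => j < i ∧ a j = 1)).card : ℝ)
       + q * ((univ.filter (fun j => i < j ∧ a j = 1)).card : ℝ))

/-- The number of `1`'s in the word `a`. -/
def ones {m : ℕ} (a : Fin m → Fin 2) : ℕ := (univ.filter (fun i => a i = 1)).card

/-- The restricted partition function `R(L, n; p, q)`: the sum of the weights `wt p q a`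
over all words `a` of length `L - 1` with entries in `{0,1}` having exactly `n` ones. -/
noncomputable def R (L n : ℕ) (p q : ℝ) : ℝ :=
  ∑ a ∈ univ.filter (fun a : Fin (L - 1) → Fin 2 => ones a = n), wt p q a

theorem sum_powersetCard_filter_mem {γ M : Type*} [DecidableEq γ] [AddCommMonoid M]
    {s : Finset γ} {a : γ} (ha : a ∈ s) (n : ℕ) (g : Finset γ → M) :
    ∑ t ∈ (powersetCard (n + 1) s).filter (a ∈ ·), g t
      = ∑ t ∈ powersetCard n (s.erase a), g (insert a t) := by
  symm
  refine sum_nbij' (insert a) (·.erase a) (fun t ht => ?_) (fun t ht => ?_) (fun t ht => ?_)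
    (fun t ht => ?_) fun _ _ => rfl
  all_goals simp only [mem_filter, mem_powersetCard] at ht ⊢
  · have hat : a ∉ t := fun h => notMem_erase a s (ht.1 h)
    refine ⟨⟨insert_subset ha (ht.1.trans (erase_subset a s)), ?_⟩, mem_insert_self a t⟩
    rw [card_insert_of_notMem hat, ht.2]
  · exact ⟨erase_subset_erase a ht.1.1, by rw [card_erase_of_mem ht.2, ht.1.2]; rfl⟩
  · exact erase_insert fun h => notMem_erase a s (ht.1 h)
  · exact insert_erase ht.2

theorem sum_powerset_union_of_disjoint {γ M : Type*} [DecidableEq γ] [AddCommMonoid M]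
    {A B : Finset γ} (h : Disjoint A B) (g : Finset γ → M) :
    ∑ S ∈ (A ∪ B).powerset, g S
      = ∑ S ∈ A.powerset, ∑ T ∈ B.powerset, g (S ∪ T) := by
  induction A using Finset.induction_on generalizing g with
  | empty => simp
  | insert a A ha ih =>
    rw [disjoint_insert_left] at h
    have haAB : a ∉ A ∪ B := by simp [ha, h.1]
    rw [insert_union, sum_powerset_insert haAB, sum_powerset_insert ha, ih h.2, ih h.2]
    simp only [insert_union]

theorem sum_powerset_union_prod_ite {α M : Type*} [LinearOrder α] [CommSemiring M]
    {A B : Finset α} {k : α} (hA : ∀ i ∈ A, i < k) (hB : ∀ i ∈ B, k < i) (p q : M)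
    (f : ℕ → M) :
    ∑ S ∈ (A ∪ B).powerset, (∏ i ∈ S, if i < k then q else p) * f #S
      = ∑ r ∈ range (#A + 1), ∑ s ∈ range (#B + 1),
          ((#A).choose r : M) * ((#B).choose s : M) * q ^ r * p ^ s * f (r + s) := by
  have hdisj : ∀ {S T : Finset α}, S ⊆ A → T ⊆ B → Disjoint S T := fun hS hT =>
    disjoint_left.2 fun i hiS hiT => (hA i (hS hiS)).not_gt (hB i (hT hiT))
  have hsplit : ∀ S ∈ A.powerset, ∀ T ∈ B.powerset,
      (∏ i ∈ S ∪ T, if i < k then q else p) * f #(S ∪ T)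
        = q ^ #S * p ^ #T * f (#S + #T) := by
    intro S hS T hT
    rw [mem_powerset] at hS hT
    rw [prod_union (hdisj hS hT), card_union_of_disjoint (hdisj hS hT),
      prod_congr rfl fun i hi => if_pos (hA i (hS hi)),
      prod_congr rfl fun i hi => if_neg (hB i (hT hi)).not_gt, prod_const, prod_const]
  rw [sum_powerset_union_of_disjoint (hdisj subset_rfl subset_rfl),
    sum_congr rfl fun S hS => (sum_congr rfl (hsplit S hS)).trans
      (sum_powerset_apply_card fun s => q ^ #S * p ^ s * f (#S + s)),
    sum_powerset_apply_card fun r =>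
      ∑ s ∈ range (#B + 1), (#B).choose s • (q ^ r * p ^ s * f (r + s))]
  simp only [nsmul_eq_mul, mul_sum]
  exact sum_congr rfl fun r _ => sum_congr rfl fun s _ => by ring

theorem sum_range_sum_range_eq_sum_range_diag {M : Type*} [AddCommMonoid M] (F : ℕ → ℕ → M)
    (a b N : ℕ) (hF : ∀ r s, a < r ∨ b < s ∨ N ≤ r + s → F r s = 0) :
    ∑ r ∈ range (a + 1), ∑ s ∈ range (b + 1), F r s
      = ∑ j ∈ range N, ∑ r ∈ range (j + 1), F r (j - r) := by
  have hfinsum : ∀ (n : ℕ) (m : ℕ → ℕ), (∀ r s, n ≤ r → F r s = 0) →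
      (∀ r s, m r ≤ s → F r s = 0) →
      ∑ r ∈ range n, ∑ s ∈ range (m r), F r s = ∑ᶠ r, ∑ᶠ s, F r s := by
    intro n m hr hs
    have hinner : ∀ r, ∑ᶠ s, F r s = ∑ s ∈ range (m r), F r s := fun r =>
      finsum_eq_sum_of_support_subset _ fun s hs' => by
        simpa using not_le.1 fun h => hs' (hs r s h)
    rw [finsum_eq_sum_of_support_subset _ (s := range n) fun r hr' => by
      simpa using not_le.1 fun h => hr' (by simp [hr r _ h])]
    exact sum_congr rfl fun r _ => (hinner r).symm
  rw [sum_range_diag_flip, hfinsum (a + 1) (fun _ => b + 1), hfinsum N (N - ·)]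
  all_goals exact fun r s h => hF r s (by omega)

section ConfigWeight

variable {α β : Type*} [LinearOrder α] [LinearOrder β] (p q : ℝ)

/-- Holes at `Z`, particles at `O`. -/
noncomputable def configWeight (Z O : Finset α) : ℝ :=
  ∏ i ∈ Z, (1 + p * (#(O.filter (· < i)) : ℝ) + q * (#(O.filter (i < ·)) : ℝ))

noncomputable def partitionSum (n : ℕ) (U : Finset α) : ℝ :=
  ∑ O ∈ powersetCard n U, configWeight p q (U \ O) O

theorem configWeight_map (f : α ↪o β) (Z O : Finset α) :
    configWeight p q (Z.map f.toEmbedding) (O.map f.toEmbedding) = configWeight p q Z O := by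
  unfold configWeight
  rw [prod_map]
  refine prod_congr rfl fun i _ => ?_
  simp only [filter_map, card_map, Function.comp_def, RelEmbedding.coe_toEmbedding, f.lt_iff_lt]

theorem partitionSum_map (f : α ↪o β) (n : ℕ) (U : Finset α) :
    partitionSum p q n (U.map f.toEmbedding) = partitionSum p q n U := by
  unfold partitionSum
  rw [powersetCard_map, sum_map]
  refine sum_congr rfl fun O _ => ?_
  simp only [RelEmbedding.coe_toEmbedding, mapEmbedding_apply, ← Finset.map_sdiff,
    configWeight_map]

/-- A particle at `k` contributes `q` to the factor of every hole before it and `p` to that of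
every hole after it. -/
theorem configWeight_insert {k : α} {Z O : Finset α} (hkZ : k ∉ Z) (hkO : k ∉ O) :
    configWeight p q Z (insert k O)
      = ∑ S ∈ Z.powerset,
          (∏ i ∈ S, if i < k then q else p) * configWeight p q (Z \ S) O := by
  have hfactor : ∀ i ∈ Z,
      1 + p * (#((insert k O).filter (· < i)) : ℝ) + q * (#((insert k O).filter (i < ·)) : ℝ)
        = (if i < k then q else p)
          + (1 + p * (#(O.filter (· < i)) : ℝ) + q * (#(O.filter (i < ·)) : ℝ)) := by
    intro i hi
    have hki : k ≠ i := fun h => hkZ (h ▸ hi)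
    have hk : ∀ (P : α → Prop) [DecidablePred P], k ∉ O.filter P :=
      fun _ _ h => hkO (mem_filter.1 h).1
    rcases hki.lt_or_gt with hlt | hgt
    · simp [filter_insert, hlt, hlt.not_gt, card_insert_of_notMem (hk _)]
      ring
    · simp [filter_insert, hgt, hgt.not_gt, card_insert_of_notMem (hk _)]
      ring
  rw [configWeight, prod_congr rfl hfactor, prod_add]
  rfl

theorem sum_configWeight_insert {k : α} {U : Finset α} (hk : k ∉ U) (n : ℕ) :
    ∑ O ∈ powersetCard n U, configWeight p q (U \ O) (insert k O)
      = ∑ S ∈ U.powerset,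
          (∏ i ∈ S, if i < k then q else p) * partitionSum p q n (U \ S) := by
  have hexpand : ∀ O ∈ powersetCard n U, configWeight p q (U \ O) (insert k O)
      = ∑ S ∈ (U \ O).powerset,
          (∏ i ∈ S, if i < k then q else p) * configWeight p q ((U \ O) \ S) O := fun O hO =>
    configWeight_insert p q (fun h => hk (mem_sdiff.1 h).1)
      (fun h => hk ((mem_powersetCard.1 hO).1 h))
  rw [sum_congr rfl hexpand, sum_comm' (t' := U.powerset) (s' := fun S => powersetCard n (U \ S))]
  · simp only [partitionSum, mul_sum, sdiff_sdiff_comm]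
  · intro O S
    simp only [mem_powersetCard, mem_powerset, subset_sdiff]
    constructor
    · rintro ⟨⟨hOU, hn⟩, hSU, hdisj⟩
      exact ⟨⟨⟨hOU, hdisj.symm⟩, hn⟩, hSU⟩
    · rintro ⟨⟨⟨hOU, hdisj⟩, hn⟩, hSU⟩
      exact ⟨⟨hOU, hn⟩, hSU, hdisj.symm⟩

theorem sum_configWeight_filter_mem {s : Finset α} {k : α} (hk : k ∈ s) (n : ℕ) :
    ∑ O ∈ (powersetCard (n + 1) s).filter (k ∈ ·), configWeight p q (s \ O) O
      = ∑ S ∈ (s.erase k).powerset,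
          (∏ i ∈ S, if i < k then q else p) * partitionSum p q n (s.erase k \ S) := by
  rw [sum_powersetCard_filter_mem hk]
  simp only [sdiff_insert, ← erase_sdiff_comm]
  exact sum_configWeight_insert p q (notMem_erase k s) n

def onesEquiv (m : ℕ) : (Fin m → Fin 2) ≃ Finset (Fin m) where
  toFun a := univ.filter (a · = 1)
  invFun O i := if i ∈ O then 1 else 0
  left_inv a := by
    funext i
    by_cases h : a i = 1 <;> simp [h]
    omega
  right_inv O := by ext i; by_cases h : i ∈ O <;> simp [h]

theorem wt_eq_configWeight {m : ℕ} (a : Fin m → Fin 2) :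
    wt p q a = configWeight p q (univ \ onesEquiv m a) (onesEquiv m a) := by
  have hzero : univ.filter (a · = 0) = univ \ onesEquiv m a := by
    ext i; simp [onesEquiv]; omega
  simp only [wt, configWeight, hzero, onesEquiv, Equiv.coe_fn_mk, filter_filter, and_comm]

theorem sum_wt_filter_mem {m n : ℕ} (k : Fin m) :
    ∑ a ∈ univ.filter (fun a : Fin m → Fin 2 => ones a = n ∧ a k = 1), wt p q a
      = ∑ O ∈ (powersetCard n univ).filter (k ∈ ·), configWeight p q (univ \ O) O :=
  sum_equiv (onesEquiv m) (fun a => by rw [mem_filter]; simp [ones, onesEquiv])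
    fun a _ => wt_eq_configWeight p q a

theorem R_succ (m n : ℕ) : R (m + 1) n p q = partitionSum p q n (univ : Finset (Fin m)) :=
  sum_equiv (onesEquiv m) (fun a => by rw [mem_filter]; simp [ones, onesEquiv])
    fun a _ => wt_eq_configWeight p q a

theorem partitionSum_eq_R (n : ℕ) (U : Finset α) : partitionSum p q n U = R (#U + 1) n p q := by
  rw [R_succ, ← partitionSum_map p q (U.orderEmbOfFin rfl), map_orderEmbOfFin_univ]

theorem R_eq_zero {L n : ℕ} (h : L - 1 < n) : R L n p q = 0 :=
  sum_eq_zero fun a ha =>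
    absurd (mem_filter.1 ha).2 ((card_filter_le _ _).trans_lt (by simpa using h)).ne

end ConfigWeight

/-- the weighted sum over configurations having an ordinary particle at
distance `L - k` behind the tracer (word position `k`, i.e. index `k - 1`). -/
theorem density_behind (L n k : ℕ) (hn1 : 1 ≤ n) (hk1 : 1 ≤ k)
    (hk2 : k ≤ L - 1) (p q : ℝ) :
    (∑ a ∈ univ.filter (fun a : Fin (L - 1) → Fin 2 =>
        ones a = n ∧ a ⟨k - 1, by omega⟩ = 1), wt p q a)
    = ∑ j ∈ Finset.range (L - n), ∑ r ∈ Finset.range (j + 1),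
        (Nat.choose (k - 1) r : ℝ) * (Nat.choose (L - 1 - k) (j - r) : ℝ)
          * q ^ r * p ^ (j - r) * R (L - j - 1) (n - 1) p q := by
  obtain ⟨n, rfl⟩ : ∃ m, n = m + 1 := ⟨n - 1, by omega⟩
  set k0 : Fin (L - 1) := ⟨k - 1, by omega⟩
  have hsplit : univ.erase k0 = Iio k0 ∪ Ioi k0 := by ext i; simp [lt_or_lt_iff_ne]
  have hA : #(Iio k0) = k - 1 := Fin.card_Iio k0
  have hB : #(Ioi k0) = L - 1 - k := by rw [Fin.card_Ioi]; simp only [k0]; omega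
  have hR : ∀ S ∈ (univ.erase k0).powerset,
      partitionSum p q n (univ.erase k0 \ S) = R (L - 1 - #S) n p q := by
    intro S hS
    have hcard := card_le_card (mem_powerset.1 hS)
    rw [card_erase_of_mem (mem_univ k0), card_univ, Fintype.card_fin] at hcard
    rw [partitionSum_eq_R, card_sdiff_of_subset (mem_powerset.1 hS),
      card_erase_of_mem (mem_univ k0), card_univ, Fintype.card_fin]
    congr 1
    omega
  rw [sum_wt_filter_mem, sum_configWeight_filter_mem p q (mem_univ k0),
    sum_congr rfl fun S hS => by rw [hR S hS], hsplit,
    sum_powerset_union_prod_ite (fun i hi => mem_Iio.1 hi) (fun i hi => mem_Ioi.1 hi) p q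
      fun j => R (L - 1 - j) n p q,
    hA, hB, sum_range_sum_range_eq_sum_range_diag _ _ _ (L - (n + 1))]
  · refine sum_congr rfl fun j hj => sum_congr rfl fun r hr => ?_
    rw [mem_range] at hj hr
    rw [Nat.add_sub_cancel' (by omega : r ≤ j), Nat.add_sub_cancel,
      show L - 1 - j = L - j - 1 by omega]
  · intro r s hrs
    obtain hr | hr := lt_or_ge (k - 1) r
    · simp [Nat.choose_eq_zero_of_lt hr]
    obtain hs | hs := lt_or_ge (L - 1 - k) s
    · simp [Nat.choose_eq_zero_of_lt hs]
    rw [R_eq_zero p q (by omega), mul_zero]
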